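/- Let G be a graph and let S be a 2-club cover of G of cost c. Then there exists a sequence of exactly c edge deletions and vertex splits turning G into a disjoint union of 2-clubs whose connected components are exactly the subgraphs induced by the sets of the cover; hence 2ccedvs(G) ≤ cost(C) for every 2-club cover C. -/

import Mathlib

open SimpleGraph

/-- `H` is obtained from `G` by splitting vertex `v` into two copies `v` and `v'`
(where `v'` was an isolated vertex), with `N(v₁) ∪ N(v₂) = N(v)`. -/
def IsSplitAt {V : Type*} (v v' : V) (G H : SimpleGraph V) : Prop :=
  v ≠ v' ∧ G.neighborSet v' = ∅ ∧ ¬ H.Adj v v' ∧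
  (∀ x y : V, x ≠ v → x ≠ v' → y ≠ v → y ≠ v' → (H.Adj x y ↔ G.Adj x y)) ∧
  (∀ x : V, x ≠ v → x ≠ v' → ((H.Adj v x ∨ H.Adj v' x) ↔ G.Adj v x))

/-- `H` is obtained from `G` by a single vertex split. -/
def IsSplit {V : Type*} (G H : SimpleGraph V) : Prop :=
  ∃ v v', IsSplitAt v v' G H

/-- `H` is obtained from `G` by deleting a single (existing) edge. -/
def IsEdgeDeletion {V : Type*} (G H : SimpleGraph V) : Prop :=
  ∃ u v : V, G.Adj u v ∧ H = G.deleteEdges {s(u, v)}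

/-- Editing operations: edge deletion, or vertex split (recording the split vertex
and the name of the new copy). -/
inductive Op where
  | del : ℕ → ℕ → Op
  | split : ℕ → ℕ → Op

/-- Semantics of one operation. -/
def OpApplies : Op → SimpleGraph ℕ → SimpleGraph ℕ → Prop
  | Op.del u v, G, H => G.Adj u v ∧ H = G.deleteEdges {s(u, v)}
  | Op.split v v', G, H => IsSplitAt v v' G H

/-- Applying a list of operations in order. -/
def OpsApply : List Op → SimpleGraph ℕ → SimpleGraph ℕ → Prop
  | [], G, H => H = G
  | o :: l, G, H => ∃ G', OpApplies o G G' ∧ OpsApply l G' H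

def IsSplitOp : Op → Prop
  | Op.split _ _ => True
  | Op.del _ _ => False

/-- The set of vertices on which a split is performed in the list of operations. -/
def splitVerts (l : List Op) : Set ℕ := {v | ∃ v', Op.split v v' ∈ l}

/-- `G` is a disjoint union of 2-clubs: within each connected component all
distances are at most 2. -/
def Is2ClubGraph (G : SimpleGraph ℕ) : Prop :=
  ∀ u v : ℕ, G.Reachable u v → G.dist u v ≤ 2

/-- Minimum number of vertex splits turning `G` into a disjoint union of 2-clubs. -/
noncomputable def twoCcvs (G : SimpleGraph ℕ) : ℕ :=
  sInf {k | ∃ l H, l.length = k ∧ (∀ o ∈ l, IsSplitOp o) ∧ OpsApply l G H ∧ Is2ClubGraph H}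

/-- Minimum number of edge deletions and vertex splits turning `G` into a
disjoint union of 2-clubs. -/
noncomputable def twoCcedvs (G : SimpleGraph ℕ) : ℕ :=
  sInf {k | ∃ l H, l.length = k ∧ OpsApply l G H ∧ Is2ClubGraph H}

/-- The subgraph of `G` induced on `s` (kept on the same vertex type, all
vertices outside `s` becoming isolated). -/
def inducedOn (G : SimpleGraph ℕ) (s : Set ℕ) : SimpleGraph ℕ where
  Adj x y := G.Adj x y ∧ x ∈ s ∧ y ∈ s
  symm := ⟨fun x y h => ⟨h.1.symm, h.2.2, h.2.1⟩⟩
  loopless := ⟨fun x h => G.loopless.irrefl x h.1⟩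

/-- The set `s` induces a 2-club in `G` (connected, diameter at most 2). -/
def Inducing2Club (G : SimpleGraph ℕ) (s : Set ℕ) : Prop :=
  ∀ u ∈ s, ∀ v ∈ s, (inducedOn G s).Reachable u v ∧ (inducedOn G s).dist u v ≤ 2

/-- The path with vertices `0, 1, …, m` (length `m`). -/
def pathG (m : ℕ) : SimpleGraph ℕ :=
  SimpleGraph.fromRel (fun i j => j = i + 1 ∧ j ≤ m)

/-- The cycle with vertices `0, 1, …, n-1`. -/
def cycleG (n : ℕ) : SimpleGraph ℕ :=
  SimpleGraph.fromRel (fun i j => i < n ∧ j = (i + 1) % n)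

/-- Total cost of a 2-club cover: each vertex pays (multiplicity − 1), each edge
not contained in some set of the cover pays 1. -/
noncomputable def coverCost (G : SimpleGraph ℕ) (C : Finset (Finset ℕ)) : ℕ :=
  (∑ v ∈ C.sup id, ((C.filter (fun S => v ∈ S)).card - 1)) +
    Set.ncard {e : Sym2 ℕ | e ∈ G.edgeSet ∧ ¬ ∃ S ∈ C, ∀ x ∈ e, x ∈ S}

/-- `C` is a 2-club cover of `G`: it covers the vertices of `G` and each set
induces a 2-club. -/
def Is2ClubCover (G : SimpleGraph ℕ) (C : Finset (Finset ℕ)) : Prop :=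
  (∀ v ∈ G.support, ∃ S ∈ C, v ∈ S) ∧ ∀ S ∈ C, Inducing2Club G (↑S : Set ℕ)

/-!
Delete every edge that lies in no set of the cover: this pays the edge part of the cost, and
afterwards every edge lies inside a cover set while each set still induces a 2-club. Then, as long
as some vertex `v` lies in two sets `S ≠ T`, split off a fresh vertex `v'` that takes over the
edges of `v` inside `T`, and replace `T` by its copy with `v` renamed to `v'`. This keeps both
properties and lowers `∑_v (mult v - 1) = ∑_{S ∈ C} |S| - |⋃ C|` by exactly one. Once every vertex
lies in a single set, each connected component stays inside one set, hence is a 2-club.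
-/

open Finset

lemma exists_mem_erase_or_iff {α : Type*} [DecidableEq α] {s : Finset α} {a : α}
    {P : α → Prop} (ha : a ∈ s) : (P a ∨ ∃ x ∈ s.erase a, P x) ↔ ∃ x ∈ s, P x := by
  conv_rhs => rw [← insert_erase ha, exists_mem_insert]

lemma OpsApply.append {l₁ l₂ : List Op} {G K H : SimpleGraph ℕ}
    (h₁ : OpsApply l₁ G K) (h₂ : OpsApply l₂ K H) : OpsApply (l₁ ++ l₂) G H := by
  induction l₁ generalizing G with
  | nil => cases h₁; exact h₂
  | cons o l ih =>
    obtain ⟨G', ho, hl⟩ := h₁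
    exact ⟨G', ho, ih hl⟩

lemma exists_opsApply_deleteEdges {G : SimpleGraph ℕ} {F : Finset (Sym2 ℕ)}
    (hF : ↑F ⊆ G.edgeSet) : ∃ l : List Op, l.length = #F ∧ OpsApply l G (G.deleteEdges ↑F) := by
  induction F using Finset.induction_on generalizing G with
  | empty => exact ⟨[], rfl, by simp [OpsApply]⟩
  | @insert e F he ih =>
    induction e using Sym2.ind with
    | _ u w =>
      rw [coe_insert, Set.insert_subset_iff, mem_edgeSet] at hF
      have hF' : ↑F ⊆ (G.deleteEdges {s(u, w)}).edgeSet := by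
        rw [edgeSet_deleteEdges]
        exact fun f hf => ⟨hF.2 hf, fun h => he (by rwa [Set.mem_singleton_iff.mp h] at hf)⟩
      obtain ⟨l, hlen, hops⟩ := ih hF'
      refine ⟨Op.del u w :: l, by simp [hlen, card_insert_of_notMem he], _, ⟨hF.1, rfl⟩, ?_⟩
      rwa [deleteEdges_deleteEdges, ← Set.insert_eq, ← coe_insert] at hops

lemma exists_opsApply_of_le {G H : SimpleGraph ℕ} (hle : H ≤ G)
    (hfin : (G.edgeSet \ H.edgeSet).Finite) :
    ∃ l : List Op, l.length = (G.edgeSet \ H.edgeSet).ncard ∧ OpsApply l G H := by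
  obtain ⟨l, hlen, hops⟩ := exists_opsApply_deleteEdges (G := G) (F := hfin.toFinset) (by simp)
  rw [Set.Finite.coe_toFinset, deleteEdges_sdiff_eq_of_le hle] at hops
  exact ⟨l, by rw [hlen, Set.ncard_eq_toFinset_card _ hfin], hops⟩

def coverGraph (G : SimpleGraph ℕ) (D : Finset (Finset ℕ)) : SimpleGraph ℕ :=
  ⨆ S ∈ D, inducedOn G ↑S

section Cover

variable {G G' : SimpleGraph ℕ} {D : Finset (Finset ℕ)} {s : Set ℕ} {a b : ℕ}

lemma coverGraph_adj : (coverGraph G D).Adj a b ↔ G.Adj a b ∧ ∃ S ∈ D, a ∈ S ∧ b ∈ S := by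
  simp only [coverGraph, iSup_adj, inducedOn, Finset.mem_coe]
  aesop

lemma coverGraph_le : coverGraph G D ≤ G := fun _ _ h => (coverGraph_adj.mp h).1

lemma le_coverGraph_coverGraph : coverGraph G D ≤ coverGraph (coverGraph G D) D :=
  fun _ _ h => coverGraph_adj.mpr ⟨h, (coverGraph_adj.mp h).2⟩

lemma inducedOn_le : inducedOn G s ≤ G := fun _ _ h => h.1

lemma inducedOn_mono (h : ∀ x ∈ s, ∀ y ∈ s, G.Adj x y → G'.Adj x y) :
    inducedOn G s ≤ inducedOn G' s :=
  fun x y ⟨hxy, hx, hy⟩ => ⟨h x hx y hy hxy, hx, hy⟩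

lemma Inducing2Club.mono (hG : Inducing2Club G s)
    (h : ∀ x ∈ s, ∀ y ∈ s, G.Adj x y → G'.Adj x y) : Inducing2Club G' s := by
  intro u hu w hw
  obtain ⟨hr, hd⟩ := hG u hu w hw
  exact ⟨hr.mono (inducedOn_mono h), (hr.dist_anti (inducedOn_mono h)).trans hd⟩

lemma Inducing2Club.comap (σ : ℕ ≃ ℕ) (hG : Inducing2Club G s) :
    Inducing2Club (G.comap σ) (σ ⁻¹' s) := by
  have hind : inducedOn (G.comap σ) (σ ⁻¹' s) = (inducedOn G s).comap σ := rfl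
  let φ := (Iso.comap σ (inducedOn G s)).symm.toHom
  have hφ : ∀ x, φ (σ x) = x := σ.symm_apply_apply
  intro u hu w hw
  obtain ⟨hr, hd⟩ := hG (σ u) hu (σ w) hw
  obtain ⟨p, hp⟩ := hr.exists_walk_length_eq_dist
  rw [hind]
  refine ⟨?_, ?_⟩
  · simpa only [hφ] using hr.map φ
  · calc _ ≤ (p.map φ).length := by simpa only [hφ] using dist_le (p.map φ)
      _ ≤ 2 := by rw [Walk.length_map, hp]; exact hd

end Cover

def coverExcess (C : Finset (Finset ℕ)) : ℕ :=
  ∑ v ∈ C.sup id, (#{S ∈ C | v ∈ S} - 1)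

section Excess

variable {C : Finset (Finset ℕ)}

lemma coverCost_eq (G : SimpleGraph ℕ) (C : Finset (Finset ℕ)) :
    coverCost G C = coverExcess C +
      Set.ncard {e : Sym2 ℕ | e ∈ G.edgeSet ∧ ¬ ∃ S ∈ C, ∀ x ∈ e, x ∈ S} := rfl

lemma coverExcess_add_card_sup (C : Finset (Finset ℕ)) :
    coverExcess C + #(C.sup id) = ∑ S ∈ C, #S := by
  have hpos : ∀ v ∈ C.sup id, 1 ≤ #{S ∈ C | v ∈ S} := by
    intro v hv
    obtain ⟨S, hS, hvS⟩ := mem_sup.mp hv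
    exact card_pos.mpr ⟨S, mem_filter.mpr ⟨hS, hvS⟩⟩
  calc coverExcess C + #(C.sup id) = ∑ v ∈ C.sup id, #{S ∈ C | v ∈ S} := by
        rw [coverExcess, card_eq_sum_ones, ← sum_add_distrib]
        exact sum_congr rfl fun v hv => Nat.sub_add_cancel (hpos v hv)
    _ = ∑ S ∈ C, #{v ∈ C.sup id | v ∈ S} :=
        (sum_card_bipartiteAbove_eq_sum_card_bipartiteBelow (fun S v => v ∈ S)).symm
    _ = ∑ S ∈ C, #S := by
        refine sum_congr rfl fun S hS => ?_
        rw [filter_mem_eq_inter]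
        exact congrArg card (inter_eq_right.mpr (le_sup (f := id) hS))

lemma eq_of_coverExcess_eq_zero (h : coverExcess C = 0) {S₁ S₂ : Finset ℕ} {v : ℕ}
    (hS₁ : S₁ ∈ C) (hS₂ : S₂ ∈ C) (hv₁ : v ∈ S₁) (hv₂ : v ∈ S₂) : S₁ = S₂ := by
  have hv : #{S ∈ C | v ∈ S} - 1 = 0 := sum_eq_zero_iff.mp h v (mem_sup.mpr ⟨S₁, hS₁, hv₁⟩)
  exact (card_le_one (s := {S ∈ C | v ∈ S})).mp (by omega)
    S₁ (mem_filter.mpr ⟨hS₁, hv₁⟩) S₂ (mem_filter.mpr ⟨hS₂, hv₂⟩)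

lemma exists_mem_mem_of_coverExcess_ne_zero (h : coverExcess C ≠ 0) :
    ∃ v, ∃ S ∈ C, ∃ T ∈ C, S ≠ T ∧ v ∈ S ∧ v ∈ T := by
  obtain ⟨v, -, hv⟩ := exists_ne_zero_of_sum_ne_zero h
  obtain ⟨S, hS, T, hT, hST⟩ := one_lt_card.mp (show 1 < #{S ∈ C | v ∈ S} by omega)
  rw [mem_filter] at hS hT
  exact ⟨v, S, hS.1, T, hT.1, hST, hS.2, hT.2⟩

end Excess

/-- The copy `v'` of `v` takes over the edges of `v` inside `T`, and `v` keeps those covered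
by the other sets of `C`. -/
def splitGraph (G : SimpleGraph ℕ) (C : Finset (Finset ℕ)) (T : Finset ℕ) (v v' : ℕ) :
    SimpleGraph ℕ :=
  coverGraph G (C.erase T) ⊔ (inducedOn G T).comap (Equiv.swap v v')

def splitCover (C : Finset (Finset ℕ)) (T : Finset ℕ) (v v' : ℕ) : Finset (Finset ℕ) :=
  insert (T.map (Equiv.swap v v').toEmbedding) (C.erase T)

section Split

variable {G : SimpleGraph ℕ} {C : Finset (Finset ℕ)} {T : Finset ℕ} {v v' a b : ℕ}

lemma mem_map_swap :
    a ∈ T.map (Equiv.swap v v').toEmbedding ↔ Equiv.swap v v' a ∈ T := by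
  rw [mem_map_equiv, Equiv.symm_swap]

lemma splitGraph_adj : (splitGraph G C T v v').Adj a b ↔
    (G.Adj a b ∧ ∃ S ∈ C.erase T, a ∈ S ∧ b ∈ S) ∨
      (G.Adj (Equiv.swap v v' a) (Equiv.swap v v' b) ∧
        Equiv.swap v v' a ∈ T ∧ Equiv.swap v v' b ∈ T) := by
  simp only [splitGraph, sup_adj, coverGraph_adj, comap_adj, inducedOn, Finset.mem_coe]

lemma adj_iff_of_le_coverGraph (hcov : G ≤ coverGraph G C) (hT : T ∈ C) :
    G.Adj a b ↔ (G.Adj a b ∧ ∃ S ∈ C.erase T, a ∈ S ∧ b ∈ S) ∨ (G.Adj a b ∧ a ∈ T ∧ b ∈ T) := by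
  rw [← and_or_left, or_comm, exists_mem_erase_or_iff (P := fun S => a ∈ S ∧ b ∈ S) hT,
    iff_self_and]
  exact fun h => (coverGraph_adj.mp (hcov h)).2

lemma isSplitAt_splitGraph (hcov : G ≤ coverGraph G C) (hT : T ∈ C) (hvT : v ∈ T)
    (hv' : ∀ S ∈ C, v' ∉ S) : IsSplitAt v v' G (splitGraph G C T v v') := by
  have hnadj : ∀ x, ¬ G.Adj v' x := fun x h => by
    obtain ⟨S, hS, hv'S, -⟩ := (coverGraph_adj.mp (hcov h)).2
    exact hv' S hS hv'S
  have hvv' : v ≠ v' := fun h => hv' T hT (h ▸ hvT)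
  refine ⟨hvv', ?_, ?_, fun x y hxv hxv' hyv hyv' => ?_, fun x hxv hxv' => ?_⟩
  · exact Set.eq_empty_of_forall_notMem hnadj
  · simp only [splitGraph_adj, Equiv.swap_apply_left, Equiv.swap_apply_right, hv' T hT,
      and_false, false_and, or_false]
    rintro ⟨-, S, hS, -, hv'S⟩
    exact hv' S (mem_of_mem_erase hS) hv'S
  · rw [splitGraph_adj, Equiv.swap_apply_of_ne_of_ne hxv hxv',
      Equiv.swap_apply_of_ne_of_ne hyv hyv']
    exact (adj_iff_of_le_coverGraph hcov hT).symm
  · rw [splitGraph_adj, splitGraph_adj, Equiv.swap_apply_left, Equiv.swap_apply_right,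
      Equiv.swap_apply_of_ne_of_ne hxv hxv']
    conv_rhs => rw [adj_iff_of_le_coverGraph hcov hT]
    simp only [hnadj, false_and, or_false, false_or, hvT, true_and]

lemma splitGraph_le_coverGraph :
    splitGraph G C T v v' ≤ coverGraph (splitGraph G C T v v') (splitCover C T v v') := by
  intro a b h
  refine coverGraph_adj.mpr ⟨h, ?_⟩
  rcases splitGraph_adj.mp h with ⟨-, S, hS, ha, hb⟩ | ⟨-, ha, hb⟩
  · exact ⟨S, mem_insert_of_mem hS, ha, hb⟩
  · exact ⟨_, mem_insert_self _ _, mem_map_swap.mpr ha, mem_map_swap.mpr hb⟩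

lemma inducing2Club_splitGraph (hclub : ∀ S ∈ C, Inducing2Club G S) (hT : T ∈ C) :
    ∀ S ∈ splitCover C T v v', Inducing2Club (splitGraph G C T v v') S := by
  intro S hS
  rcases mem_insert.mp hS with rfl | hS
  · have hT' : (↑(T.map (Equiv.swap v v').toEmbedding) : Set ℕ) = Equiv.swap v v' ⁻¹' T := by
      ext; exact mem_map_swap
    rw [hT']
    exact ((hclub T hT).comap _).mono fun x hx y hy h => splitGraph_adj.mpr (Or.inr ⟨h, hx, hy⟩)
  · exact (hclub S (mem_of_mem_erase hS)).mono
      fun x hx y hy h => splitGraph_adj.mpr (Or.inl ⟨h, S, hS, hx, hy⟩)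

lemma coverExcess_splitCover {S : Finset ℕ} (hT : T ∈ C) (hvT : v ∈ T)
    (hS : S ∈ C) (hST : S ≠ T) (hvS : v ∈ S) (hv' : ∀ S ∈ C, v' ∉ S) :
    coverExcess (splitCover C T v v') + 1 = coverExcess C := by
  rw [splitCover]
  set T' := T.map (Equiv.swap v v').toEmbedding
  have hmemT' : ∀ a, a ∈ T' ↔ Equiv.swap v v' a ∈ T := fun _ => mem_map_swap
  have hv'T' : v' ∈ T' := by rwa [hmemT', Equiv.swap_apply_right]
  have hT' : T' ∉ C.erase T := fun h => hv' _ (mem_of_mem_erase h) hv'T'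
  have hv'sup : v' ∉ C.sup id := fun h => by
    obtain ⟨S, hS, h⟩ := mem_sup.mp h
    exact hv' S hS h
  have hsum : ∑ S ∈ insert T' (C.erase T), #S = ∑ S ∈ C, #S := by
    rw [sum_insert hT', card_map, add_sum_erase _ _ hT]
  have hsup : (insert T' (C.erase T)).sup id = insert v' (C.sup id) := by
    ext w
    rw [mem_insert, mem_sup, mem_sup, exists_mem_insert, ← exists_mem_erase_or_iff hT]
    simp only [id, hmemT']
    rcases eq_or_ne w v' with rfl | hw'
    · simp [hvT]
    rcases eq_or_ne w v with rfl | hw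
    · simp only [Equiv.swap_apply_left, hv' T hT, hvT, hw', false_or, true_or, iff_true]
      exact ⟨S, mem_erase.mpr ⟨hST, hS⟩, hvS⟩
    · simp only [Equiv.swap_apply_of_ne_of_ne hw hw', hw', false_or]
  have h₁ := coverExcess_add_card_sup C
  have h₂ := coverExcess_add_card_sup (insert T' (C.erase T))
  rw [hsum, hsup, card_insert_of_notMem hv'sup] at h₂
  omega

end Split

section Assembly

variable {G : SimpleGraph ℕ} {C : Finset (Finset ℕ)}

lemma is2ClubGraph_of_coverExcess_eq_zero (hcov : G ≤ coverGraph G C)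
    (hclub : ∀ S ∈ C, Inducing2Club G S) (h0 : coverExcess C = 0) : Is2ClubGraph G := by
  have hstay : ∀ {u w} (_ : G.Walk u w) {S}, S ∈ C → u ∈ S → w ∈ S := by
    intro u w p
    induction p with
    | nil => exact fun _ hu => hu
    | cons h _ ih =>
      intro S hS hu
      obtain ⟨S', hS', hu', hw'⟩ := (coverGraph_adj.mp (hcov h)).2
      obtain rfl := eq_of_coverExcess_eq_zero h0 hS hS' hu hu'
      exact ih hS hw'
  rintro u w ⟨p⟩
  cases p with
  | nil => simp
  | cons h q =>
    obtain ⟨S, hS, hu, -⟩ := (coverGraph_adj.mp (hcov h)).2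
    obtain ⟨hr, hd⟩ := hclub S hS u hu w (hstay (.cons h q) hS hu)
    exact (hr.dist_anti inducedOn_le).trans hd

lemma exists_isSplitAt_of_coverExcess_ne_zero (hcov : G ≤ coverGraph G C)
    (hclub : ∀ S ∈ C, Inducing2Club G S) (h : coverExcess C ≠ 0) :
    ∃ v v' G' C', IsSplitAt v v' G G' ∧ G' ≤ coverGraph G' C' ∧
      (∀ S ∈ C', Inducing2Club G' S) ∧ coverExcess C' + 1 = coverExcess C := by
  obtain ⟨v, S, hS, T, hT, hST, hvS, hvT⟩ := exists_mem_mem_of_coverExcess_ne_zero h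
  obtain ⟨v', hv'⟩ := Infinite.exists_notMem_finset (C.sup id)
  have hv'C : ∀ S ∈ C, v' ∉ S := fun S hS h => hv' (mem_sup.mpr ⟨S, hS, h⟩)
  exact ⟨v, v', _, _, isSplitAt_splitGraph hcov hT hvT hv'C, splitGraph_le_coverGraph,
    inducing2Club_splitGraph hclub hT, coverExcess_splitCover hT hvT hS hST hvS hv'C⟩

lemma exists_opsApply_is2ClubGraph (hcov : G ≤ coverGraph G C)
    (hclub : ∀ S ∈ C, Inducing2Club G S) :
    ∃ l H, l.length = coverExcess C ∧ OpsApply l G H ∧ Is2ClubGraph H := by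
  induction h : coverExcess C generalizing G C with
  | zero => exact ⟨[], G, rfl, rfl, is2ClubGraph_of_coverExcess_eq_zero hcov hclub h⟩
  | succ n ih =>
    obtain ⟨v, v', G', C', hsplit, hcov', hclub', hexc⟩ :=
      exists_isSplitAt_of_coverExcess_ne_zero hcov hclub (by omega)
    obtain ⟨l, H, hl, hops, hH⟩ := ih hcov' hclub' (by omega)
    exact ⟨Op.split v v' :: l, H, by simp [hl], ⟨G', hsplit, hops⟩, hH⟩

lemma edgeSet_sdiff_coverGraph :
    G.edgeSet \ (coverGraph G C).edgeSet =
      {e | e ∈ G.edgeSet ∧ ¬ ∃ S ∈ C, ∀ x ∈ e, x ∈ S} := by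
  ext e
  induction e using Sym2.ind with
  | _ a b =>
    simp only [Set.mem_sdiff, mem_edgeSet, coverGraph_adj, Set.mem_ofPred_eq, Sym2.mem_iff,
      forall_eq_or_imp, forall_eq]
    exact and_congr_right fun h => by rw [and_iff_right h]

end Assembly

theorem stmt18_general (G : SimpleGraph ℕ)
    (C : Finset (Finset ℕ)) (hC : Is2ClubCover G C) :
    (∃ (l : List Op) (H : SimpleGraph ℕ),
        l.length = coverCost G C ∧ OpsApply l G H ∧ Is2ClubGraph H) ∧
      twoCcedvs G ≤ coverCost G C := by
  obtain ⟨hsupp, hclub⟩ := hC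
  have hfin : (G.edgeSet \ (coverGraph G C).edgeSet).Finite := by
    refine ((C.sup id).sym2.finite_toSet.subset ?_).subset Set.sdiff_subset
    rw [coe_sym2, edgeSet_subset_sym2_iff]
    intro v hv
    obtain ⟨S, hS, hvS⟩ := hsupp v hv
    exact mem_sup.mpr ⟨S, hS, hvS⟩
  obtain ⟨l₁, hl₁, hops₁⟩ := exists_opsApply_of_le coverGraph_le hfin
  obtain ⟨l₂, H, hl₂, hops₂, hH⟩ := exists_opsApply_is2ClubGraph le_coverGraph_coverGraph
    fun S hS => (hclub S hS).mono fun x hx y hy h => coverGraph_adj.mpr ⟨h, S, hS, hx, hy⟩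
  have hmain : ∃ (l : List Op) (H : SimpleGraph ℕ),
      l.length = coverCost G C ∧ OpsApply l G H ∧ Is2ClubGraph H := by
    refine ⟨l₁ ++ l₂, H, ?_, hops₁.append hops₂, hH⟩
    rw [List.length_append, hl₁, hl₂, coverCost_eq, edgeSet_sdiff_coverGraph, add_comm]
  exact ⟨hmain, Nat.sInf_le hmain⟩

theorem stmt18 (G : SimpleGraph ℕ) (hfin : G.support.Finite)
    (C : Finset (Finset ℕ)) (hC : Is2ClubCover G C) :
    (∃ (l : List Op) (H : SimpleGraph ℕ),
        l.length = coverCost G C ∧ OpsApply l G H ∧ Is2ClubGraph H) ∧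
      twoCcedvs G ≤ coverCost G C :=
  stmt18_general G C hC
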